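/- arXiv:2001.05529 — 3 statements merged into one kernel-verified Lean document; each statement's English description precedes it below -/
import Mathlib

section
/- Let Ω_p ⊂ ℝⁿ be a bounded Lipschitz domain, Γ ⊂ ∂Ω_p, ε > 0, and Γ_ε = {y ∈ Ω_p : dist(y, Γ) < ε}. For v ∈ H¹(Ω_p) ∩ C(Ω̄_p) and a test function φ ∈ C(Ω̄_p), under suitable regularity of Γ (e.g. Γ a flat portion of the boundary), (1/ε)∫_{Γ_ε} v φ dx → ∫_Γ (Tv)(Tφ) ds as ε → 0, where T is the trace (restriction) operator. -/
/-!
By Fubini, `∫_{(0,ε) × B} f = ∫_0^ε g` with `g t = ∫_B f (t, ·)`. Since `f` is continuous and `B`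
has compact closure, `g` is continuous, so by the fundamental theorem of calculus
`ε⁻¹ ∫_0^ε g → g 0 = ∫_B f (0, ·)`.
-/

open MeasureTheory Filter Topology Set

variable {E : Type*} [NormedAddCommGroup E] [NormedSpace ℝ E]

theorem tendsto_inv_smul_intervalIntegral_zero_right [CompleteSpace E] {g : ℝ → E}
    (hg : Continuous g) :
    Tendsto (fun ε : ℝ => ε⁻¹ • ∫ t in (0 : ℝ)..ε, g t) (𝓝[>] 0) (𝓝 (g 0)) := by
  simpa using (hg.integral_hasStrictDerivAt 0 0).hasDerivAt.tendsto_slope_zero_right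

section
variable {Y : Type*} [TopologicalSpace Y] [SecondCountableTopology Y] [MeasurableSpace Y]
  [BorelSpace Y] {ν : Measure Y} [IsLocallyFiniteMeasure ν] {B : Set Y}

theorem continuous_setIntegral_of_isCompact_closure {X : Type*} [TopologicalSpace X]
    [FirstCountableTopology X] [LocallyCompactSpace X] {f : X → Y → E}
    (hf : Continuous f.uncurry) (hB : IsCompact (closure B)) :
    Continuous fun x => ∫ y in B, f x y ∂ν := by
  have := continuous_parametric_integral_of_continuous (μ := ν.restrict B) hf hB
  simpa [Measure.restrict_restrict isClosed_closure.measurableSet,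
    inter_eq_right.mpr subset_closure] using this

theorem setIntegral_Ioo_prod_eq_intervalIntegral [T2Space Y] {f : ℝ × Y → E} (hf : Continuous f)
    (hB : IsCompact (closure B)) {ε : ℝ} (hε : 0 ≤ ε) :
    ∫ p in Ioo 0 ε ×ˢ B, f p ∂(volume.prod ν) = ∫ t in (0 : ℝ)..ε, ∫ y in B, f (t, y) ∂ν := by
  have hint : IntegrableOn f (Ioo 0 ε ×ˢ B) (volume.prod ν) :=
    (hf.continuousOn.integrableOn_compact (isCompact_Icc.prod hB)).mono_set
      (prod_mono Ioo_subset_Icc_self subset_closure)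
  rw [setIntegral_prod f hint, intervalIntegral.integral_of_le hε, integral_Ioc_eq_integral_Ioo]

theorem tendsto_inv_smul_setIntegral_Ioo_prod [CompleteSpace E] [T2Space Y] {f : ℝ × Y → E}
    (hf : Continuous f) (hB : IsCompact (closure B)) :
    Tendsto (fun ε : ℝ => ε⁻¹ • ∫ p in Ioo 0 ε ×ˢ B, f p ∂(volume.prod ν)) (𝓝[>] 0)
      (𝓝 (∫ y in B, f (0, y) ∂ν)) := by
  refine (tendsto_inv_smul_intervalIntegral_zero_right
    (continuous_setIntegral_of_isCompact_closure (f := fun t y => f (t, y)) hf hB)).congr' ?_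
  filter_upwards [self_mem_nhdsWithin] with ε hε
  rw [setIntegral_Ioo_prod_eq_intervalIntegral hf hB (le_of_lt hε)]

end

theorem stmt6_general {m : ℕ} (B : Set (Fin m → ℝ))
    (hBbd : Bornology.IsBounded B)
    (v φ : ℝ × (Fin m → ℝ) → ℝ)
    (hv : Continuous v) (hφ : Continuous φ) :
    Filter.Tendsto
      (fun ε : ℝ => (1 / ε) * ∫ p in Set.Ioo (0 : ℝ) ε ×ˢ B, v p * φ p)
      (nhdsWithin 0 (Set.Ioi 0))
      (nhds (∫ b in B, v (0, b) * φ (0, b))) := by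
  simpa only [one_div, smul_eq_mul, ← Measure.volume_eq_prod] using
    tendsto_inv_smul_setIntegral_Ioo_prod (ν := volume) (f := fun p => v p * φ p)
      (hv.mul hφ) hBbd.isCompact_closure

/-- model case of a flat boundary face. `Ω_p = (0,1) × B` with flat
face `Γ = {0} × B`, and `Γ_ε = (0,ε) × B` its ε-thick envelope.  For `v` in
`H¹ ∩ C` and a continuous test function `φ`,
`(1/ε) ∫_{Γ_ε} v φ dx → ∫_Γ (Tv)(Tφ) ds` as `ε → 0⁺`, where the trace `T` of a
continuous function is its restriction to `Γ`. -/
theorem stmt6 {m : ℕ} (B : Set (Fin m → ℝ)) (hB : MeasurableSet B)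
    (hBbd : Bornology.IsBounded B)
    (v φ : ℝ × (Fin m → ℝ) → ℝ)
    (hv : Continuous v) (hφ : Continuous φ)
    (hv2 : MemLp v 2 (volume.restrict (Set.Ioo (0 : ℝ) 1 ×ˢ B))) :
    Filter.Tendsto
      (fun ε : ℝ => (1 / ε) * ∫ p in Set.Ioo (0 : ℝ) ε ×ˢ B, v p * φ p)
      (nhdsWithin 0 (Set.Ioi 0))
      (nhds (∫ b in B, v (0, b) * φ (0, b))) :=
  stmt6_general B hBbd v φ hv hφ
end

section
/- Let V, Q be Hilbert spaces, a: V×V → ℝ bounded, symmetric, and coercive on all of V with constant α, and b: V×Q → ℝ bounded with constant ‖b‖ and satisfying the inf-sup condition inf_{q∈Q} sup_{v∈V} b(v,q)/(‖v‖‖q‖) ≥ β > 0. Then for every (f,g) ∈ V'×Q' the saddle point problem a(u,v)+b(v,p) = f(v) ∀v, b(u,q) = g(q) ∀q has a unique solution (u,p) ∈ V×Q, with ‖u‖_V + ‖p‖_Q ≤ C(‖f‖_{V'} + ‖g‖_{Q'}) where C depends only on α, β, ‖a‖, ‖b‖. -/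
/-!
Coercivity makes `v ↦ a(v, ·)` an isomorphism `A : V ≃ V'` (Lax–Milgram) with `‖A⁻¹‖ ≤ 1/α`.
Eliminating `u = A⁻¹(f - Bᵀp)` from the first equation turns the second one into the Schur
complement equation `S p = B A⁻¹ f - g`, `S = B A⁻¹ Bᵀ`. The inf-sup condition makes `S`
coercive: for `w = A⁻¹ Bᵀ q` we have `s(q, q) = a(w, w) ≥ α ‖w‖²` and
`β ‖q‖ ≤ ‖Bᵀ q‖ ≤ ‖a‖ ‖w‖`. Lax–Milgram for `S` then determines `p`, hence `u`, uniquely,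
and the two inverse bounds give the stability estimate.
-/

open InnerProductSpace

section

variable {E : Type*} [NormedAddCommGroup E] [NormedSpace ℝ E]
  {a : E →L[ℝ] E →L[ℝ] ℝ} {α β : ℝ}

lemma mul_norm_le_norm_apply_of_coercive (ha : ∀ v, α * ‖v‖ ^ 2 ≤ a v v) (v : E) :
    α * ‖v‖ ≤ ‖a v‖ := by
  rcases (norm_nonneg v).eq_or_lt with hv | hv
  · rw [← hv, mul_zero]; exact norm_nonneg _
  · refine le_of_mul_le_mul_right ?_ hv
    calc α * ‖v‖ * ‖v‖ = α * ‖v‖ ^ 2 := by ring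
      _ ≤ a v v := ha v
      _ ≤ ‖a v‖ * ‖v‖ := (le_abs_self _).trans ((a v).le_opNorm v)

lemma iSup_apply_div_norm_le_norm (ℓ : StrongDual ℝ E) :
    ⨆ v : {v : E // v ≠ 0}, ℓ v.1 / ‖v.1‖ ≤ ‖ℓ‖ :=
  Real.iSup_le (fun v => div_le_of_le_mul₀ (norm_nonneg _) (norm_nonneg _)
    ((le_abs_self _).trans (ℓ.le_opNorm v.1))) (norm_nonneg _)

lemma ker_eq_bot_of_coercive (hα : 0 < α) (ha : ∀ v, α * ‖v‖ ^ 2 ≤ a v v) :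
    LinearMap.ker (a : E →ₗ[ℝ] StrongDual ℝ E) = ⊥ := by
  refine LinearMap.ker_eq_bot'.mpr fun v hv => norm_le_zero_iff.mp ?_
  have := mul_norm_le_norm_apply_of_coercive ha v
  rw [show a v = 0 from hv, norm_zero] at this
  exact nonpos_of_mul_nonpos_right this hα

/-- The coercivity constant of the Schur complement. The `max` only matters when `E = 0`,
where `‖a‖ = 0 < α`; it keeps the constant positive. -/
noncomputable def schurConst (a : E →L[ℝ] E →L[ℝ] ℝ) (α β : ℝ) : ℝ :=
  α * β ^ 2 / max ‖a‖ α ^ 2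

lemma schurConst_pos (hα : 0 < α) (hβ : 0 < β) : 0 < schurConst a α β := by
  have : 0 < max ‖a‖ α := lt_max_of_lt_right hα
  unfold schurConst; positivity

end

section Hilbert

variable {V Q : Type*}
  [NormedAddCommGroup V] [InnerProductSpace ℝ V] [CompleteSpace V]
  [NormedAddCommGroup Q] [InnerProductSpace ℝ Q]

section LaxMilgram

variable {a : V →L[ℝ] V →L[ℝ] ℝ} {α : ℝ}

lemma range_eq_top_of_coercive (hα : 0 < α) (ha : ∀ v, α * ‖v‖ ^ 2 ≤ a v v) :
    LinearMap.range (a : V →ₗ[ℝ] StrongDual ℝ V) = ⊤ := by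
  have hcoer : IsCoercive a := ⟨α, hα, fun v => by simpa [sq, mul_assoc] using ha v⟩
  refine LinearMap.range_eq_top.mpr fun ℓ => ⟨hcoer.continuousLinearEquivOfBilin.symm
    ((toDual ℝ V).symm ℓ), ContinuousLinearMap.ext fun w => ?_⟩
  rw [ContinuousLinearMap.coe_coe, ← IsCoercive.continuousLinearEquivOfBilin_apply hcoer,
    ContinuousLinearEquiv.apply_symm_apply, toDual_symm_apply]

noncomputable def coerciveEquiv (hα : 0 < α) (ha : ∀ v, α * ‖v‖ ^ 2 ≤ a v v) :
    V ≃L[ℝ] StrongDual ℝ V :=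
  .ofBijective a (ker_eq_bot_of_coercive hα ha) (range_eq_top_of_coercive hα ha)

@[simp]
lemma coerciveEquiv_apply (hα : 0 < α) (ha : ∀ v, α * ‖v‖ ^ 2 ≤ a v v) (v : V) :
    coerciveEquiv hα ha v = a v := rfl

lemma norm_coerciveEquiv_symm_le (hα : 0 < α) (ha : ∀ v, α * ‖v‖ ^ 2 ≤ a v v)
    (ℓ : StrongDual ℝ V) : ‖(coerciveEquiv hα ha).symm ℓ‖ ≤ α⁻¹ * ‖ℓ‖ := by
  rw [le_inv_mul_iff₀ hα]
  have := mul_norm_le_norm_apply_of_coercive ha ((coerciveEquiv hα ha).symm ℓ)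
  rwa [← coerciveEquiv_apply hα ha, ContinuousLinearEquiv.apply_symm_apply] at this

end LaxMilgram

section Schur

variable {a : V →L[ℝ] V →L[ℝ] ℝ} {α β : ℝ} (hα : 0 < α) (ha : ∀ v, α * ‖v‖ ^ 2 ≤ a v v)
  (b : V →L[ℝ] Q →L[ℝ] ℝ)

noncomputable def schurComplement : Q →L[ℝ] Q →L[ℝ] ℝ :=
  b ∘L ((coerciveEquiv hα ha).symm : StrongDual ℝ V →L[ℝ] V) ∘L b.flip

lemma schurComplement_apply (q r : Q) :
    schurComplement hα ha b q r = b ((coerciveEquiv hα ha).symm (b.flip q)) r := rfl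

variable {b} in
lemma schurConst_mul_sq_le_schurComplement (hβ : 0 < β)
    (hb : ∀ q, β * ‖q‖ ≤ ‖b.flip q‖) (q : Q) :
    schurConst a α β * ‖q‖ ^ 2 ≤ schurComplement hα ha b q q := by
  set w := (coerciveEquiv hα ha).symm (b.flip q)
  have haw : a w = b.flip q := by
    rw [← coerciveEquiv_apply hα ha, ContinuousLinearEquiv.apply_symm_apply]
  have hM : 0 < max ‖a‖ α := lt_max_of_lt_right hα
  have hq : β * ‖q‖ ≤ max ‖a‖ α * ‖w‖ :=
    calc β * ‖q‖ ≤ ‖a w‖ := haw ▸ hb q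
      _ ≤ ‖a‖ * ‖w‖ := a.le_opNorm w
      _ ≤ max ‖a‖ α * ‖w‖ := by gcongr; exact le_max_left _ _
  calc schurConst a α β * ‖q‖ ^ 2 = α * (β * ‖q‖ / max ‖a‖ α) ^ 2 := by
        unfold schurConst; field_simp
    _ ≤ α * ‖w‖ ^ 2 := by
        gcongr
        rw [div_le_iff₀ hM, mul_comm ‖w‖]; exact hq
    _ ≤ a w w := ha w
    _ = schurComplement hα ha b q q := by rw [haw]; rfl

end Schur

def SolvesSaddlePoint (a : V →L[ℝ] V →L[ℝ] ℝ) (b : V →L[ℝ] Q →L[ℝ] ℝ) (f : StrongDual ℝ V)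
    (g : StrongDual ℝ Q) (up : V × Q) : Prop :=
  (∀ v, a up.1 v + b v up.2 = f v) ∧ ∀ q, b up.1 q = g q

section WellPosed

variable [CompleteSpace Q] {a : V →L[ℝ] V →L[ℝ] ℝ} {b : V →L[ℝ] Q →L[ℝ] ℝ} {α β : ℝ}

noncomputable def schurEquiv (hα : 0 < α) (ha : ∀ v, α * ‖v‖ ^ 2 ≤ a v v) (hβ : 0 < β)
    (hb : ∀ q, β * ‖q‖ ≤ ‖b.flip q‖) :
    Q ≃L[ℝ] StrongDual ℝ Q :=
  coerciveEquiv (schurConst_pos hα hβ) (schurConst_mul_sq_le_schurComplement hα ha hβ hb)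

lemma solvesSaddlePoint_iff (hα : 0 < α) (ha : ∀ v, α * ‖v‖ ^ 2 ≤ a v v) (hβ : 0 < β)
    (hb : ∀ q, β * ‖q‖ ≤ ‖b.flip q‖)
    {f : StrongDual ℝ V} {g : StrongDual ℝ Q} {u : V} {p : Q} :
    SolvesSaddlePoint a b f g (u, p) ↔
      p = (schurEquiv hα ha hβ hb).symm (b ((coerciveEquiv hα ha).symm f) - g) ∧
        u = (coerciveEquiv hα ha).symm (f - b.flip p) := by
  have hu : (∀ v, a u v + b v p = f v) ↔ u = (coerciveEquiv hα ha).symm (f - b.flip p) := by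
    rw [ContinuousLinearEquiv.eq_symm_apply, coerciveEquiv_apply, eq_sub_iff_add_eq,
      ContinuousLinearMap.ext_iff]
    rfl
  unfold SolvesSaddlePoint
  rw [hu, and_comm]
  refine and_congr_left fun hu_eq => ?_
  rw [ContinuousLinearEquiv.eq_symm_apply, schurEquiv, coerciveEquiv_apply, eq_sub_iff_add_eq,
    ContinuousLinearMap.ext_iff, hu_eq]
  simp only [add_apply, sub_apply, schurComplement_apply, map_sub]
  exact forall_congr' fun q => sub_eq_iff_eq_add'.trans eq_comm

lemma SolvesSaddlePoint.norm_add_norm_le {f : StrongDual ℝ V} {g : StrongDual ℝ Q}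
    {u : V} {p : Q} (h : SolvesSaddlePoint a b f g (u, p))
    (hα : 0 < α) (ha : ∀ v, α * ‖v‖ ^ 2 ≤ a v v) (hβ : 0 < β)
    (hb : ∀ q, β * ‖q‖ ≤ ‖b.flip q‖) :
    ‖u‖ + ‖p‖ ≤ (α⁻¹ + (α⁻¹ * ‖b‖ + 1) ^ 2 / schurConst a α β) * (‖f‖ + ‖g‖) := by
  obtain ⟨hp, hu⟩ := (solvesSaddlePoint_iff hα ha hβ hb).mp h
  set c := schurConst a α β
  set k := α⁻¹ * ‖b‖
  have hc : 0 < c := schurConst_pos hα hβ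
  have hk : 0 ≤ k := by positivity
  have hbf : ‖b ((coerciveEquiv hα ha).symm f)‖ ≤ k * ‖f‖ :=
    calc _ ≤ ‖b‖ * ‖(coerciveEquiv hα ha).symm f‖ := b.le_opNorm _
      _ ≤ ‖b‖ * (α⁻¹ * ‖f‖) := by gcongr; exact norm_coerciveEquiv_symm_le hα ha f
      _ = k * ‖f‖ := by ring
  have hp_le : ‖p‖ ≤ c⁻¹ * (k * ‖f‖ + ‖g‖) := by
    rw [hp]
    refine (norm_coerciveEquiv_symm_le hc _ _).trans ?_
    gcongr
    exact (norm_sub_le _ _).trans (add_le_add_left hbf _)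
  have hu_le : ‖u‖ ≤ α⁻¹ * ‖f‖ + k * ‖p‖ := by
    rw [hu]
    calc _ ≤ α⁻¹ * ‖f - b.flip p‖ := norm_coerciveEquiv_symm_le hα ha _
      _ ≤ α⁻¹ * (‖f‖ + ‖b‖ * ‖p‖) := by
        gcongr
        refine (norm_sub_le _ _).trans ?_
        gcongr
        simpa only [ContinuousLinearMap.opNorm_flip] using b.flip.le_opNorm p
      _ = α⁻¹ * ‖f‖ + k * ‖p‖ := by ring
  have hfg : k * ‖f‖ + ‖g‖ ≤ (k + 1) * (‖f‖ + ‖g‖) := by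
    nlinarith [mul_nonneg hk (norm_nonneg g), norm_nonneg f]
  calc ‖u‖ + ‖p‖ ≤ α⁻¹ * ‖f‖ + (k + 1) * ‖p‖ := by linarith
    _ ≤ α⁻¹ * ‖f‖ + (k + 1) * (c⁻¹ * ((k + 1) * (‖f‖ + ‖g‖))) := by
      gcongr; exact hp_le.trans (by gcongr)
    _ ≤ (α⁻¹ + (k + 1) ^ 2 / c) * (‖f‖ + ‖g‖) := by
      have : 0 ≤ α⁻¹ * ‖g‖ := by positivity
      linarith [show (α⁻¹ + (k + 1) ^ 2 / c) * (‖f‖ + ‖g‖) =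
        α⁻¹ * ‖f‖ + α⁻¹ * ‖g‖ + (k + 1) * (c⁻¹ * ((k + 1) * (‖f‖ + ‖g‖))) by ring]

theorem saddlePoint_wellPosed (hα : 0 < α) (ha : ∀ v, α * ‖v‖ ^ 2 ≤ a v v) (hβ : 0 < β)
    (hb : ∀ q, β * ‖q‖ ≤ ‖b.flip q‖) :
    ∃ C > (0 : ℝ), ∀ (f : StrongDual ℝ V) (g : StrongDual ℝ Q),
      (∃! up : V × Q, SolvesSaddlePoint a b f g up) ∧
        ∀ up : V × Q, SolvesSaddlePoint a b f g up → ‖up.1‖ + ‖up.2‖ ≤ C * (‖f‖ + ‖g‖) := by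
  have hc : 0 < schurConst a α β := schurConst_pos hα hβ
  refine ⟨α⁻¹ + (α⁻¹ * ‖b‖ + 1) ^ 2 / schurConst a α β, by positivity, fun f g => ⟨?_, ?_⟩⟩
  · set p := (schurEquiv hα ha hβ hb).symm (b ((coerciveEquiv hα ha).symm f) - g)
    refine ⟨((coerciveEquiv hα ha).symm (f - b.flip p), p),
      (solvesSaddlePoint_iff hα ha hβ hb).mpr ⟨rfl, rfl⟩, fun ⟨u', p'⟩ h => ?_⟩
    obtain ⟨rfl, rfl⟩ := (solvesSaddlePoint_iff hα ha hβ hb).mp h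
    rfl
  · exact fun ⟨u, p⟩ h => h.norm_add_norm_le hα ha hβ hb

end WellPosed

end Hilbert

theorem stmt7_general {V Q : Type*}
    [NormedAddCommGroup V] [InnerProductSpace ℝ V] [CompleteSpace V]
    [NormedAddCommGroup Q] [InnerProductSpace ℝ Q] [CompleteSpace Q]
    (a : V →ₗ[ℝ] V →ₗ[ℝ] ℝ) (b : V →ₗ[ℝ] Q →ₗ[ℝ] ℝ)
    (Ca Cb α β : ℝ) (hα : 0 < α) (hβ : 0 < β)
    (ha_bdd : ∀ u v : V, |a u v| ≤ Ca * ‖u‖ * ‖v‖)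
    (ha_coer : ∀ v : V, α * ‖v‖ ^ 2 ≤ a v v)
    (hb_bdd : ∀ (v : V) (q : Q), |b v q| ≤ Cb * ‖v‖ * ‖q‖)
    (hb_infsup : ∀ q : Q, β * ‖q‖ ≤ ⨆ v : {v : V // v ≠ 0}, b v.1 q / ‖v.1‖) :
    ∃ C > (0 : ℝ), ∀ (f : V →L[ℝ] ℝ) (g : Q →L[ℝ] ℝ),
      (∃! up : V × Q,
        (∀ v : V, a up.1 v + b v up.2 = f v) ∧ (∀ q : Q, b up.1 q = g q))
      ∧ ∀ up : V × Q,
          ((∀ v : V, a up.1 v + b v up.2 = f v) ∧ (∀ q : Q, b up.1 q = g q)) →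
          ‖up.1‖ + ‖up.2‖ ≤ C * (‖f‖ + ‖g‖) := by
  let a' := a.mkContinuous₂ Ca ha_bdd
  let b' := b.mkContinuous₂ Cb hb_bdd
  exact saddlePoint_wellPosed (a := a') (b := b') hα ha_coer hβ
    fun q => (hb_infsup q).trans (iSup_apply_div_norm_le_norm (b'.flip q))

/-- Brezzi's theorem in the case where the symmetric bounded
bilinear form `a` is coercive on all of `V` and `b` is bounded and satisfies
the inf-sup condition with constant `β > 0`.  For every `(f,g) ∈ V' × Q'` the
saddle point problem has a unique solution `(u,p)`, with a stability bound
`‖u‖ + ‖p‖ ≤ C (‖f‖ + ‖g‖)` whose constant depends only on `α`, `β`, `‖a‖`,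
`‖b‖` (and not on `f`, `g`). -/
theorem stmt7 {V Q : Type*}
    [NormedAddCommGroup V] [InnerProductSpace ℝ V] [CompleteSpace V]
    [NormedAddCommGroup Q] [InnerProductSpace ℝ Q] [CompleteSpace Q]
    (a : V →ₗ[ℝ] V →ₗ[ℝ] ℝ) (b : V →ₗ[ℝ] Q →ₗ[ℝ] ℝ)
    (Ca Cb α β : ℝ) (hα : 0 < α) (hβ : 0 < β)
    (ha_bdd : ∀ u v : V, |a u v| ≤ Ca * ‖u‖ * ‖v‖)
    (ha_sym : ∀ u v : V, a u v = a v u)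
    (ha_coer : ∀ v : V, α * ‖v‖ ^ 2 ≤ a v v)
    (hb_bdd : ∀ (v : V) (q : Q), |b v q| ≤ Cb * ‖v‖ * ‖q‖)
    (hb_infsup : ∀ q : Q, β * ‖q‖ ≤ ⨆ v : {v : V // v ≠ 0}, b v.1 q / ‖v.1‖) :
    ∃ C > (0 : ℝ), ∀ (f : V →L[ℝ] ℝ) (g : Q →L[ℝ] ℝ),
      (∃! up : V × Q,
        (∀ v : V, a up.1 v + b v up.2 = f v) ∧ (∀ q : Q, b up.1 q = g q))
      ∧ ∀ up : V × Q,
          ((∀ v : V, a up.1 v + b v up.2 = f v) ∧ (∀ q : Q, b up.1 q = g q)) →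
          ‖up.1‖ + ‖up.2‖ ≤ C * (‖f‖ + ‖g‖) :=
  stmt7_general a b Ca Cb α β hα hβ ha_bdd ha_coer hb_bdd hb_infsup
end

section
/- Let Ω_p ⊂ ℝⁿ be a bounded Lipschitz domain with Γ ⊂ ∂Ω_p and Dirichlet portion ∂Ω_{p,D} of positive measure, K > 0. Assume ∂_{n,ε}: H¹_{0,D}(Ω_p) → L²(Γ) is a bounded linear surjection with bounded right inverse E. Then for every f in the dual of √K·H¹_{0,D}(Ω_p) and h ∈ (1/√K)L²(Γ), the saddle problem: find (p_p, λ) ∈ √K H¹_{0,D}(Ω_p) × √K L²(Γ) with K(∇p_p,∇q)_{Ω_p} + K(λ, ∂_{n,ε}q)_Γ = f(q) ∀q and K(∂_{n,ε}p_p, w)_Γ = (h,w)_Γ ∀w, has a unique solution satisfying ‖p_p‖_{√K H¹} ≤ C(‖h‖²_{(1/√K)L²(Γ)} + ‖f‖²_{(1/√K)H^{-1}})^{1/2}, with C depending only on Ω_p, ‖∂_{n,ε}‖, ‖E‖ (not on K). -/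
/-!
Dividing both equations by `K` turns the system into the unscaled saddle point problem
`a(p, q) + ⟪λ, Dn q⟫ = g q`, `Dn p = k` with data `g = K⁻¹ f`, `k = K⁻¹ h`. For that problem,
write `p = E k + u` with `u ∈ ker Dn`: coercivity of `a` on `ker Dn` (Lax–Milgram) determines `u`,
and the residual `g - a(p, ·)`, which vanishes on `ker Dn`, equals `⟪λ, Dn ·⟫` for the Riesz
representative `λ` of its composition with `E`. Testing with `u` bounds `‖p‖` by a multiple of
`‖g‖ + ‖k‖`, which by linearity also gives uniqueness; the factor `K⁻¹` in the data then yields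
`√K ‖p‖ ≲ K^{-1/2} (‖f‖ + ‖h‖)`.
-/

open scoped RealInnerProductSpace

section SaddlePoint

variable {V L : Type*} [NormedAddCommGroup V] [InnerProductSpace ℝ V]
  [NormedAddCommGroup L] [InnerProductSpace ℝ L]

theorem IsCoercive.exists_forall_apply_eq [CompleteSpace V] {B : V →L[ℝ] V →L[ℝ] ℝ}
    (hB : IsCoercive B) (φ : V →L[ℝ] ℝ) : ∃ z, ∀ y, B z y = φ y :=
  ⟨hB.continuousLinearEquivOfBilin.symm ((InnerProductSpace.toDual ℝ V).symm φ), fun y => by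
    rw [← hB.continuousLinearEquivOfBilin_apply, ContinuousLinearEquiv.apply_symm_apply,
      InnerProductSpace.toDual_symm_apply]⟩

variable {B : V →L[ℝ] V →L[ℝ] ℝ} {D : V →L[ℝ] L} {E : L →L[ℝ] V} {α : ℝ}

def IsSaddleSolution (B : V →L[ℝ] V →L[ℝ] ℝ) (D : V →L[ℝ] L) (g : V →L[ℝ] ℝ) (k : L)
    (p : V) (l : L) : Prop :=
  (∀ q, B p q + ⟪l, D q⟫ = g q) ∧ D p = k

theorem isSaddleSolution_inv_smul_iff {K : ℝ} (hK : K ≠ 0) {f : V →L[ℝ] ℝ} {h : L} {p : V}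
    {l : L} :
    IsSaddleSolution B D (K⁻¹ • f) (K⁻¹ • h) p l ↔
      (∀ q, K * B p q + K * ⟪l, D q⟫ = f q) ∧ ∀ w, K * ⟪D p, w⟫ = ⟪h, w⟫ := by
  refine and_congr (forall_congr' fun q => ?_) ?_
  · rw [smul_apply, smul_eq_mul, ← mul_add, eq_inv_mul_iff_mul_eq₀ hK]
  · rw [eq_inv_smul_iff₀ hK]
    refine ⟨fun hp w => by rw [← hp, real_inner_smul_left], fun hp => ext_inner_right ℝ ?_⟩
    intro w
    rw [real_inner_smul_left, hp]

theorem IsSaddleSolution.sub {g g' : V →L[ℝ] ℝ} {k k' : L} {p p' : V} {l l' : L}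
    (hs : IsSaddleSolution B D g k p l) (hs' : IsSaddleSolution B D g' k' p' l') :
    IsSaddleSolution B D (g - g') (k - k') (p - p') (l - l') := by
  refine ⟨fun q => ?_, by rw [map_sub, hs.2, hs'.2]⟩
  rw [map_sub, sub_apply, inner_sub_left, sub_apply, ← hs.1 q, ← hs'.1 q]
  ring

theorem exists_inner_apply_eq_of_ker [CompleteSpace L] (hE : Function.LeftInverse D E)
    (r : V →L[ℝ] ℝ) (hr : ∀ y ∈ D.ker, r y = 0) : ∃ l, ∀ q, ⟪l, D q⟫ = r q := by
  refine ⟨(InnerProductSpace.toDual ℝ L).symm (r.comp E), fun q => ?_⟩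
  rw [InnerProductSpace.toDual_symm_apply, ContinuousLinearMap.comp_apply, ← sub_eq_zero,
    ← map_sub]
  exact hr _ (by simp [hE (D q)])

theorem exists_apply_eq_on_ker [CompleteSpace V] (hα : 0 < α) (hB : ∀ v, α * ‖v‖ ^ 2 ≤ B v v)
    (hE : Function.LeftInverse D E) (g : V →L[ℝ] ℝ) (k : L) :
    ∃ p, D p = k ∧ ∀ y ∈ D.ker, B p y = g y := by
  let ι := D.ker.subtypeL
  have hcoer : IsCoercive (B.bilinearComp ι ι) :=
    ⟨α, hα, fun u => by simpa [ι, sq, mul_assoc] using hB u⟩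
  obtain ⟨z, hz⟩ := hcoer.exists_forall_apply_eq ((g - B (E k)).comp ι)
  refine ⟨E k + z, by simp [hE k], fun y hy => ?_⟩
  have := hz ⟨y, hy⟩
  simp only [ContinuousLinearMap.bilinearComp_apply, ContinuousLinearMap.comp_apply,
    sub_apply] at this
  rw [map_add, add_apply]
  exact add_eq_of_eq_sub' this

theorem exists_isSaddleSolution [CompleteSpace V] [CompleteSpace L] (hα : 0 < α)
    (hB : ∀ v, α * ‖v‖ ^ 2 ≤ B v v) (hE : Function.LeftInverse D E) (g : V →L[ℝ] ℝ) (k : L) :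
    ∃ p l, IsSaddleSolution B D g k p l := by
  obtain ⟨p, hpk, hp⟩ := exists_apply_eq_on_ker hα hB hE g k
  obtain ⟨l, hl⟩ := exists_inner_apply_eq_of_ker hE (g - B p) fun y hy => by
    simp [hp y hy]
  exact ⟨p, l, fun q => by rw [hl, sub_apply, add_sub_cancel], hpk⟩

theorem IsSaddleSolution.norm_le (hα : 0 < α) (hB : ∀ v, α * ‖v‖ ^ 2 ≤ B v v)
    (hE : Function.LeftInverse D E) {g : V →L[ℝ] ℝ} {k : L} {p : V} {l : L}
    (hs : IsSaddleSolution B D g k p l) :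
    ‖p‖ ≤ ((1 + ‖B‖ * ‖E‖) / α + ‖E‖) * (‖g‖ + ‖k‖) := by
  set u := p - E k
  have hu : D u = 0 := by rw [map_sub, hs.2, hE k, sub_self]
  have hBuu : B u u = g u - B (E k) u := by
    rw [show B u = B p - B (E k) from map_sub B p (E k), sub_apply, ← hs.1 u, hu,
      inner_zero_right, add_zero]
  have hBEk : |B (E k) u| ≤ ‖B‖ * ‖E‖ * ‖k‖ * ‖u‖ :=
    calc |B (E k) u| ≤ ‖B‖ * ‖E k‖ * ‖u‖ := B.le_opNorm₂ _ _
      _ ≤ ‖B‖ * (‖E‖ * ‖k‖) * ‖u‖ := by gcongr; exact E.le_opNorm k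
      _ = ‖B‖ * ‖E‖ * ‖k‖ * ‖u‖ := by ring
  have hαu : α * ‖u‖ ≤ ‖g‖ + ‖B‖ * ‖E‖ * ‖k‖ := by
    rcases (norm_nonneg u).eq_or_lt with hu0 | hu0
    · rw [← hu0, mul_zero]; positivity
    refine le_of_mul_le_mul_right ?_ hu0
    calc α * ‖u‖ * ‖u‖ ≤ B u u := by simpa [sq, mul_assoc] using hB u
      _ ≤ ‖g‖ * ‖u‖ + ‖B‖ * ‖E‖ * ‖k‖ * ‖u‖ := by
        rw [hBuu]
        linarith [(Real.le_norm_self _).trans (g.le_opNorm u), neg_abs_le (B (E k) u)]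
      _ = (‖g‖ + ‖B‖ * ‖E‖ * ‖k‖) * ‖u‖ := by ring
  have hEk : ‖E k‖ ≤ ‖E‖ * ‖k‖ := E.le_opNorm k
  calc ‖p‖ = ‖u + E k‖ := by rw [sub_add_cancel]
    _ ≤ ‖u‖ + ‖E k‖ := norm_add_le _ _
    _ ≤ (‖g‖ + ‖B‖ * ‖E‖ * ‖k‖) / α + ‖E‖ * ‖k‖ := by
      gcongr; rwa [le_div_iff₀' hα]
    _ ≤ ((1 + ‖B‖ * ‖E‖) / α + ‖E‖) * (‖g‖ + ‖k‖) := by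
      have : 0 ≤ ‖B‖ * ‖E‖ * ‖g‖ / α + ‖E‖ * ‖g‖ + ‖k‖ / α := by positivity
      rw [← sub_nonneg]
      convert this using 1
      ring

theorem IsSaddleSolution.eq_zero (hα : 0 < α) (hB : ∀ v, α * ‖v‖ ^ 2 ≤ B v v)
    (hE : Function.LeftInverse D E) {p : V} {l : L} (hs : IsSaddleSolution B D 0 0 p l) :
    p = 0 ∧ l = 0 := by
  have hp : p = 0 := norm_le_zero_iff.mp (by simpa using hs.norm_le hα hB hE)
  refine ⟨hp, (inner_self_eq_zero (𝕜 := ℝ)).mp ?_⟩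
  simpa [hp, hE l] using hs.1 (E l)

theorem existsUnique_isSaddleSolution [CompleteSpace V] [CompleteSpace L] (hα : 0 < α)
    (hB : ∀ v, α * ‖v‖ ^ 2 ≤ B v v) (hE : Function.LeftInverse D E) (g : V →L[ℝ] ℝ) (k : L) :
    ∃! pl : V × L, IsSaddleSolution B D g k pl.1 pl.2 := by
  obtain ⟨p, l, hs⟩ := exists_isSaddleSolution hα hB hE g k
  refine ⟨(p, l), hs, fun pl hpl => ?_⟩
  obtain ⟨hp, hl⟩ := (by simpa using hpl.sub hs : IsSaddleSolution B D 0 0 _ _).eq_zero hα hB hE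
  exact Prod.ext (sub_eq_zero.mp hp) (sub_eq_zero.mp hl)

end SaddlePoint

theorem sqrt_mul_inv_mul_add_le {K : ℝ} (hK : 0 < K) (a b : ℝ) :
    √K * (K⁻¹ * (a + b)) ≤ √2 * √(1 / K * a ^ 2 + 1 / K * b ^ 2) := by
  have hab : a + b ≤ √2 * √(a ^ 2 + b ^ 2) := by
    rw [← Real.sqrt_mul zero_le_two]
    exact Real.le_sqrt_of_sq_le (by nlinarith [sq_nonneg (a - b)])
  calc √K * (K⁻¹ * (a + b)) = √(1 / K) * (a + b) := by
        rw [← mul_assoc, ← div_eq_mul_inv, Real.sqrt_div_self', one_div, one_div, Real.sqrt_inv]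
    _ ≤ √(1 / K) * (√2 * √(a ^ 2 + b ^ 2)) := by gcongr
    _ = √2 * √(1 / K * a ^ 2 + 1 / K * b ^ 2) := by
      rw [← mul_add, Real.sqrt_mul (by positivity)]; ring

theorem stmt8_general {V L : Type*}
    [NormedAddCommGroup V] [InnerProductSpace ℝ V] [CompleteSpace V]
    [NormedAddCommGroup L] [InnerProductSpace ℝ L] [CompleteSpace L]
    (a : V →ₗ[ℝ] V →ₗ[ℝ] ℝ) (α : ℝ) (hα : 0 < α)
    (ha_bdd : ∀ u v : V, |a u v| ≤ ‖u‖ * ‖v‖)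
    (ha_coer : ∀ v : V, α * ‖v‖ ^ 2 ≤ a v v)
    (Dn : V →L[ℝ] L) (E : L →L[ℝ] V) (hDnE : ∀ w : L, Dn (E w) = w) :
    ∃ C > (0 : ℝ), ∀ K : ℝ, 0 < K → ∀ (f : V →L[ℝ] ℝ) (h : L),
      (∃! pl : V × L,
        (∀ q : V, K * a pl.1 q + K * ⟪pl.2, Dn q⟫ = f q)
          ∧ (∀ w : L, K * ⟪Dn pl.1, w⟫ = ⟪h, w⟫))
      ∧ ∀ pl : V × L,
          ((∀ q : V, K * a pl.1 q + K * ⟪pl.2, Dn q⟫ = f q)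
            ∧ (∀ w : L, K * ⟪Dn pl.1, w⟫ = ⟪h, w⟫)) →
          Real.sqrt K * ‖pl.1‖
            ≤ C * Real.sqrt ((1 / K) * ‖h‖ ^ 2 + (1 / K) * ‖f‖ ^ 2) := by
  let B : V →L[ℝ] V →L[ℝ] ℝ := a.mkContinuous₂ 1 fun u v => by simpa using ha_bdd u v
  set M := (1 + ‖B‖ * ‖E‖) / α + ‖E‖
  refine ⟨√2 * M, by positivity, fun K hK f h => ?_⟩
  have hsys (pl : V × L) :
      ((∀ q, K * a pl.1 q + K * ⟪pl.2, Dn q⟫ = f q) ∧ ∀ w, K * ⟪Dn pl.1, w⟫ = ⟪h, w⟫) ↔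
        IsSaddleSolution B Dn (K⁻¹ • f) (K⁻¹ • h) pl.1 pl.2 :=
    (isSaddleSolution_inv_smul_iff (B := B) hK.ne').symm
  simp only [hsys]
  refine ⟨existsUnique_isSaddleSolution hα ha_coer hDnE _ _, fun pl hpl => ?_⟩
  calc √K * ‖pl.1‖ ≤ √K * (M * (‖K⁻¹ • f‖ + ‖K⁻¹ • h‖)) := by
        gcongr; exact hpl.norm_le hα ha_coer hDnE
    _ = M * (√K * (K⁻¹ * (‖h‖ + ‖f‖))) := by
      rw [norm_smul, norm_smul, norm_inv, Real.norm_of_nonneg hK.le]; ring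
    _ ≤ M * (√2 * √(1 / K * ‖h‖ ^ 2 + 1 / K * ‖f‖ ^ 2)) :=
      mul_le_mul_of_nonneg_left (sqrt_mul_inv_mul_add_le hK _ _) (by positivity)
    _ = √2 * M * √(1 / K * ‖h‖ ^ 2 + 1 / K * ‖f‖ ^ 2) := by ring

/-- well-posedness, uniformly in `K > 0`, of the primal Darcy
saddle problem with an `∂_{n,ε}`-constraint.  Here `V` plays the role of
`H¹_{0,D}(Ω_p)` (a Hilbert space; by Poincaré, since `|∂Ω_{p,D}| > 0`, the
gradient form `a(·,·) = (∇·,∇·)` is bounded and coercive on `V` with constants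
depending only on `Ω_p`), `L` plays the role of `L²(Γ)`, and
`Dn : V → L` is the bounded surjective operator `∂_{n,ε}` with bounded right
inverse `E` (Assumption 1).  For every `f` in the dual of `√K·V` and every `h`
in `(1/√K)·L`, the problem
`K a(p,q) + K (λ, Dn q) = f(q) ∀q`, `K (Dn p, w) = (h, w) ∀w`
has a unique solution `(p, λ) ∈ √K V × √K L`, with
`‖p‖_{√K V} ≤ C (‖h‖²_{(1/√K)L} + ‖f‖²_{(1/√K)V'})^{1/2}` where `C` depends
only on the coercivity/boundedness constants of `a`, `‖Dn‖` and `‖E‖`,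
not on `K`. -/
theorem stmt8 {V L : Type*}
    [NormedAddCommGroup V] [InnerProductSpace ℝ V] [CompleteSpace V]
    [NormedAddCommGroup L] [InnerProductSpace ℝ L] [CompleteSpace L]
    (a : V →ₗ[ℝ] V →ₗ[ℝ] ℝ) (α : ℝ) (hα : 0 < α)
    (ha_sym : ∀ u v : V, a u v = a v u)
    (ha_bdd : ∀ u v : V, |a u v| ≤ ‖u‖ * ‖v‖)
    (ha_coer : ∀ v : V, α * ‖v‖ ^ 2 ≤ a v v)
    (Dn : V →L[ℝ] L) (E : L →L[ℝ] V) (hDnE : ∀ w : L, Dn (E w) = w) :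
    ∃ C > (0 : ℝ), ∀ K : ℝ, 0 < K → ∀ (f : V →L[ℝ] ℝ) (h : L),
      (∃! pl : V × L,
        (∀ q : V, K * a pl.1 q + K * ⟪pl.2, Dn q⟫ = f q)
          ∧ (∀ w : L, K * ⟪Dn pl.1, w⟫ = ⟪h, w⟫))
      ∧ ∀ pl : V × L,
          ((∀ q : V, K * a pl.1 q + K * ⟪pl.2, Dn q⟫ = f q)
            ∧ (∀ w : L, K * ⟪Dn pl.1, w⟫ = ⟪h, w⟫)) →
          Real.sqrt K * ‖pl.1‖
            ≤ C * Real.sqrt ((1 / K) * ‖h‖ ^ 2 + (1 / K) * ‖f‖ ^ 2) :=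
  stmt8_general a α hα ha_bdd ha_coer Dn E hDnE
end
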